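/- arXiv:2106.13032 — 5 statements merged into one kernel-verified Lean document; each statement's English description precedes it below -/
import Mathlib

section
/- Fix Δ > 0 and N angles β₁, …, β_N ∈ ℝ such that sin(πΔ(sin β_n − sin β_{n'})) ≠ 0 for all n ≠ n'. For each positive integer M let G_M be the N×N Gram matrix with entries [G_M]_{n,n'} = s(Δ,M,β_n)ᴴ s(Δ,M,β_{n'}). Then G_M converges entrywise to the N×N identity matrix as M → ∞. -/
/-- The steering vector (normalized spatial signature) of a ULA of `M` elements spaced
by `Δ` wavelengths, observed from angle `β`. -/
noncomputable def steer (Δ : ℝ) (M : ℕ) (β : ℝ) : Fin M → ℂ := fun ℓ =>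
  (1 / (Real.sqrt M : ℂ)) *
    Complex.exp (Complex.I * Real.pi * Δ * ((M : ℂ) - 1) * Real.sin β) *
    Complex.exp (-(Complex.I * 2 * Real.pi * Δ * ((ℓ : ℕ) : ℂ) * Real.sin β))

/-- The `N×N` Gram matrix of steering vectors, `[G_M]_{n,n'} = s(Δ,M,β_n)ᴴ s(Δ,M,β_{n'})`. -/
noncomputable def gram (Δ : ℝ) (M : ℕ) {N : ℕ} (β : Fin N → ℝ) :
    Matrix (Fin N) (Fin N) ℂ := fun n n' =>
  ∑ ℓ : Fin M, (starRingEnd ℂ) (steer Δ M (β n) ℓ) * steer Δ M (β n') ℓ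

lemma steer_prod_eq (Δ : ℝ) (M : ℕ) (b b' : ℝ) (ℓ : Fin M) :
    (starRingEnd ℂ) (steer Δ M b ℓ) * steer Δ M b' ℓ =
    (1 / (M : ℂ)) *
      Complex.exp (-(Complex.I * Real.pi * Δ * ((M : ℂ) - 1) * (Real.sin b - Real.sin b'))) *
      Complex.exp ((Complex.I * (2 * Real.pi * Δ * (Real.sin b - Real.sin b'))))^(ℓ : ℕ) := by
  simp only [steer, map_mul, map_one, map_div₀, Complex.conj_ofReal, ← Complex.exp_conj,
    map_neg, Complex.conj_I, map_ofNat, map_sub, map_natCast]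
  rw [← Complex.exp_nat_mul]
  have key : ∀ x a b c d : ℂ, (x * Complex.exp a * Complex.exp b) *
      (x * Complex.exp c * Complex.exp d) = (x * x) * Complex.exp (a + b + c + d) := by
    intro x a b c d
    rw [Complex.exp_add, Complex.exp_add, Complex.exp_add]; ring
  rw [key, div_mul_div_comm, one_mul, ← Complex.ofReal_mul,
    Real.mul_self_sqrt (Nat.cast_nonneg M), mul_assoc (1 / (M:ℂ)), ← Complex.exp_add]
  congr 2
  push_cast
  ring

lemma abs_exp_sub_one (θ : ℝ) :
    ‖Complex.exp ((θ : ℂ) * Complex.I) - 1‖ = 2 * |Real.sin (θ/2)| := by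
  rw [Complex.exp_mul_I]
  have heq : (Complex.cos θ + Complex.sin θ * Complex.I - 1 : ℂ) =
      ⟨Real.cos θ - 1, Real.sin θ⟩ := by
    simp [Complex.ext_iff, ← Complex.ofReal_cos, ← Complex.ofReal_sin]
  rw [heq, Complex.norm_def, Complex.normSq_mk]
  have h1 : (Real.cos θ - 1)^2 + (Real.sin θ)^2 = 4 * Real.sin (θ/2)^2 := by
    have hc : Real.cos θ = 2 * Real.cos (θ/2)^2 - 1 := by
      rw [← Real.cos_two_mul, mul_div_cancel₀ _ (two_ne_zero)]
    nlinarith [Real.sin_sq_add_cos_sq θ, Real.sin_sq_add_cos_sq (θ/2)]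
  rw [show (Real.cos θ - 1) * (Real.cos θ - 1) + Real.sin θ * Real.sin θ =
    (Real.cos θ - 1)^2 + (Real.sin θ)^2 by ring, h1,
    show (4 : ℝ) * Real.sin (θ/2)^2 = (2 * |Real.sin (θ/2)|)^2 by
      rw [mul_pow, _root_.sq_abs]; ring]
  exact Real.sqrt_sq (by positivity)

/-- For `Δ > 0` and angles `β₁, …, β_N` with `sin(πΔ(sin β_n − sin β_{n'})) ≠ 0` for all
`n ≠ n'`, the Gram matrix `G_M` converges entrywise to the identity as `M → ∞`. -/
theorem stmt3 (Δ : ℝ) (hΔ : 0 < Δ) (N : ℕ) (β : Fin N → ℝ)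
    (h : ∀ n n' : Fin N, n ≠ n' →
      Real.sin (Real.pi * Δ * (Real.sin (β n) - Real.sin (β n'))) ≠ 0) :
    ∀ n n' : Fin N,
      Filter.Tendsto (fun M : ℕ => gram Δ M β n n') Filter.atTop
        (nhds ((1 : Matrix (Fin N) (Fin N) ℂ) n n')) := by
  intro n n'
  by_cases hnn : n = n'
  · -- diagonal: eventually constantly 1
    subst hnn
    rw [Matrix.one_apply_eq]
    apply Filter.Tendsto.congr' _ tendsto_const_nhds
    filter_upwards [Filter.eventually_ge_atTop 1] with M hM
    show (1 : ℂ) = gram Δ M β n n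
    rw [gram]
    have : ∀ ℓ : Fin M, (starRingEnd ℂ) (steer Δ M (β n) ℓ) * steer Δ M (β n) ℓ
        = (1 / (M : ℂ)) := by
      intro ℓ
      rw [steer_prod_eq]
      simp
    rw [Finset.sum_congr rfl (fun ℓ _ => this ℓ), Finset.sum_const]
    have hM0 : (M : ℂ) ≠ 0 := by exact_mod_cast Nat.one_le_iff_ne_zero.mp hM
    simp [hM0]
  · -- off-diagonal
    rw [Matrix.one_apply_ne hnn]
    set δ : ℝ := Real.sin (β n) - Real.sin (β n') with hδ
    set c : ℝ := |Real.sin (Real.pi * Δ * δ)| with hc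
    have hcpos : 0 < c := abs_pos.mpr (h n n' hnn)
    set z : ℂ := Complex.exp (Complex.I * (2 * Real.pi * Δ * δ)) with hzdef
    have hzform : z = Complex.exp (((2 * Real.pi * Δ * δ : ℝ) : ℂ) * Complex.I) := by
      rw [hzdef]; congr 1; push_cast; ring
    have habs_z : ‖z‖ = 1 := by rw [hzform, Complex.norm_exp_ofReal_mul_I]
    have habs_sub : ‖z - 1‖ = 2 * c := by
      rw [hzform, abs_exp_sub_one, hc]
      congr 2
      ring
    have hz1 : z ≠ 1 := by
      intro hz
      rw [hz, sub_self, norm_zero] at habs_sub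
      linarith
    have key : ∀ M : ℕ, ‖gram Δ M β n n'‖ ≤ (1 / c) * (1 / M) := by
      intro M
      rcases Nat.eq_zero_or_pos M with hM | hM
      · subst hM
        simp [gram]
      have hsum : gram Δ M β n n' =
          (1 / (M : ℂ)) *
            Complex.exp (-(Complex.I * Real.pi * Δ * ((M : ℂ) - 1) * (δ : ℂ))) *
            ∑ ℓ ∈ Finset.range M, z ^ ℓ := by
        rw [gram]
        have : ∀ ℓ : Fin M, (starRingEnd ℂ) (steer Δ M (β n) ℓ) * steer Δ M (β n') ℓ =
            (1 / (M : ℂ)) *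
              Complex.exp (-(Complex.I * Real.pi * Δ * ((M : ℂ) - 1) * (δ : ℂ))) *
              z ^ (ℓ : ℕ) := by
          intro ℓ
          rw [steer_prod_eq, hzdef, hδ]
          push_cast
          ring_nf
        rw [Finset.sum_congr rfl (fun ℓ _ => this ℓ), ← Finset.mul_sum,
          Fin.sum_univ_eq_sum_range]
      rw [hsum]
      have hCabs : ‖
          (Complex.exp (-(Complex.I * Real.pi * Δ * ((M : ℂ) - 1) * (δ : ℂ))))‖ = 1 := by
        rw [show (-(Complex.I * Real.pi * Δ * ((M : ℂ) - 1) * (δ : ℂ))) =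
          ((-(Real.pi * Δ * ((M : ℝ) - 1) * δ) : ℝ) : ℂ) * Complex.I by push_cast; ring,
          Complex.norm_exp_ofReal_mul_I]
      have hgeom : ∑ ℓ ∈ Finset.range M, z ^ ℓ = (z ^ M - 1) / (z - 1) :=
        geom_sum_eq hz1 M
      have habs_geom : ‖∑ ℓ ∈ Finset.range M, z ^ ℓ‖ ≤ 1 / c := by
        rw [hgeom, norm_div, habs_sub]
        have hnum : ‖z ^ M - 1‖ ≤ 2 := by
          calc ‖z ^ M - 1‖ ≤ ‖z ^ M‖ + ‖(1 : ℂ)‖ :=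
                norm_sub_le _ _
            _ = 2 := by rw [norm_pow, habs_z, one_pow, norm_one]; norm_num
        calc ‖z ^ M - 1‖ / (2 * c) ≤ 2 / (2 * c) := by
              exact div_le_div_of_nonneg_right hnum (by positivity)
          _ = 1 / c := by field_simp
      rw [show ‖(1 / (M : ℂ)) *
            Complex.exp (-(Complex.I * Real.pi * Δ * ((M : ℂ) - 1) * (δ : ℂ))) *
            ∑ ℓ ∈ Finset.range M, z ^ ℓ‖ = ‖_‖ from rfl]
      rw [norm_mul, norm_mul, hCabs, mul_one, norm_div, norm_one, Complex.norm_natCast]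
      calc (1 / (M : ℝ)) * ‖∑ ℓ ∈ Finset.range M, z ^ ℓ‖
          ≤ (1 / (M : ℝ)) * (1 / c) := by
            apply mul_le_mul_of_nonneg_left habs_geom (by positivity)
        _ = (1 / c) * (1 / M) := by ring
    have hg : Filter.Tendsto (fun M : ℕ => (1 / c) * (1 / (M : ℝ))) Filter.atTop (nhds 0) := by
      have := tendsto_one_div_atTop_nhds_zero_nat.const_mul (1 / c)
      simpa using this
    exact squeeze_zero_norm key hg
end

section
/- (Scalar form of Proposition 1.) Fix A > 0, λ > 0, and g, ψ, φ₁, φ₂ ∈ ℝ, and set s := sin φ₁ − sin φ₂ − g. For each positive integer L, let Δ_L := √A/(Lλ), let θ_{L,ℓ} := 2πgΔ_L(ℓ − (L−1)/2) + ψ for ℓ = 0, …, L−1, and let Θ_L := diag(e^{iθ_{L,0}}, …, e^{iθ_{L,L−1}}). Then as L → ∞ (with the area A held fixed) the sequence L ↦ s(Δ_L,L,φ₂)ᴴ Θ_L s(Δ_L,L,φ₁) converges to e^{iψ}·sin(π√A s/λ)/(π√A s/λ) if s ≠ 0, and to e^{iψ} if s = 0. -/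
open Complex Filter

lemma lim_inv_nat : Tendsto (fun L : ℕ => ((L : ℂ))⁻¹) atTop (nhds 0) := by
  have h0 : Tendsto (fun n : ℕ => ((((n:ℝ))⁻¹ : ℝ) : ℂ)) atTop (nhds ((0:ℝ):ℂ)) :=
    (Complex.continuous_ofReal.tendsto _).comp tendsto_inv_atTop_nhds_zero_nat
  have he : (fun n : ℕ => ((((n:ℝ))⁻¹ : ℝ) : ℂ)) = fun n : ℕ => ((n : ℂ))⁻¹ := by
    funext n; push_cast; ring
  rw [he] at h0; simpa using h0

lemma lim_mul_exp_sub_one (z : ℂ) :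
    Tendsto (fun L : ℕ => (L : ℂ) * (Complex.exp (z / L) - 1)) atTop (nhds z) := by
  have hd : HasDerivAt (fun w : ℂ => Complex.exp (z * w)) z 0 := by
    simpa using ((hasDerivAt_id (0:ℂ)).const_mul z).cexp
  have hslope := hasDerivAt_iff_tendsto_slope.mp hd
  have hinv : Tendsto (fun L : ℕ => ((L : ℂ))⁻¹) atTop (nhdsWithin 0 {(0:ℂ)}ᶜ) := by
    apply tendsto_nhdsWithin_of_tendsto_nhds_of_eventually_within _ lim_inv_nat
    filter_upwards [eventually_gt_atTop 0] with L hL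
    simp [Nat.cast_ne_zero.mpr hL.ne']
  have := hslope.comp hinv
  apply this.congr'
  filter_upwards [eventually_gt_atTop 0] with L hL
  have hLC : (L : ℂ) ≠ 0 := Nat.cast_ne_zero.mpr hL.ne'
  simp only [Function.comp_apply, slope_def_field, div_eq_mul_inv]
  field_simp
  rw [mul_zero, Complex.exp_zero]
  ring

lemma key (A lam : ℝ) (hlam : 0 < lam) (g ψ φ₁ φ₂ : ℝ) (L : ℕ) (hL : 0 < L) :
    dotProduct (star (steer (Real.sqrt A / (L * lam)) L φ₂))
          ((Matrix.diagonal fun ℓ : Fin L =>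
              Complex.exp (Complex.I *
                ((2 * Real.pi * g * (Real.sqrt A / (L * lam)) *
                    (((ℓ : ℕ) : ℝ) - ((L : ℝ) - 1) / 2) + ψ : ℝ) : ℂ))).mulVec
            (steer (Real.sqrt A / (L * lam)) L φ₁))
    = Complex.exp (Complex.I * ψ) * (L : ℂ)⁻¹ *
        ∑ ℓ : Fin L, Complex.exp (Complex.I *
           ((Real.pi * Real.sqrt A * (Real.sin φ₁ - Real.sin φ₂ - g) / lam : ℝ) : ℂ)
           * (((L : ℂ) - 1 - 2 * ((ℓ : ℕ) : ℂ)) / (L : ℂ))) := by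
  have hLC : (L : ℂ) ≠ 0 := Nat.cast_ne_zero.mpr hL.ne'
  have hlamC : (lam : ℂ) ≠ 0 := by exact_mod_cast hlam.ne'
  have hsq : (Real.sqrt L : ℂ) * (Real.sqrt L : ℂ) = (L : ℂ) := by
    rw [← Complex.ofReal_mul, Real.mul_self_sqrt (Nat.cast_nonneg L)]
    norm_cast
  rw [dotProduct, Finset.mul_sum]
  apply Finset.sum_congr rfl
  intro ℓ _
  rw [Matrix.mulVec_diagonal]
  simp only [steer, Pi.star_apply, star_mul', Complex.star_def, ← Complex.exp_conj, map_mul,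
    map_neg, map_sub, map_one, Complex.conj_I, Complex.conj_ofReal, map_natCast, map_ofNat,
    star_div₀, star_one]
  have hs : (1 / (Real.sqrt L : ℂ)) * (1 / (Real.sqrt L : ℂ)) = (L : ℂ)⁻¹ := by
    rw [div_mul_div_comm, one_mul, hsq, one_div]
  calc _ = ((1 / (Real.sqrt L : ℂ)) * (1 / (Real.sqrt L : ℂ))) *
      (Complex.exp (-Complex.I * Real.pi * (Real.sqrt A / (L * lam)) * ((L : ℂ) - 1) * Real.sin φ₂)
      * Complex.exp (-(-Complex.I * 2 * Real.pi * (Real.sqrt A / (L * lam)) * ((ℓ : ℕ) : ℂ) * Real.sin φ₂))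
      * Complex.exp (Complex.I *
                ((2 * Real.pi * g * (Real.sqrt A / (L * lam)) *
                    (((ℓ : ℕ) : ℝ) - ((L : ℝ) - 1) / 2) + ψ : ℝ) : ℂ))
      * Complex.exp (Complex.I * Real.pi * (Real.sqrt A / (L * lam)) * ((L : ℂ) - 1) * Real.sin φ₁)
      * Complex.exp (-(Complex.I * 2 * Real.pi * (Real.sqrt A / (L * lam)) * ((ℓ : ℕ) : ℂ) * Real.sin φ₁))) := by
        push_cast
        ring
    _ = _ := by
        rw [hs, ← Complex.exp_add, ← Complex.exp_add, ← Complex.exp_add, ← Complex.exp_add]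
        rw [mul_comm (Complex.exp (Complex.I * (ψ:ℂ))) ((L:ℂ)⁻¹), mul_assoc ((L:ℂ)⁻¹), ← Complex.exp_add]
        congr 1
        congr 1
        push_cast
        simp only [div_eq_mul_inv, mul_inv]
        ring

/-- Scalar form of Proposition 1: with fixed area `A > 0`, wavelength `lam > 0`,
meta-atom side `Δ_L = √A/(L·lam)`, phase shifts `θ_{L,ℓ} = 2πgΔ_L(ℓ − (L−1)/2) + ψ` and
`Θ_L = diag(e^{iθ_{L,ℓ}})`, the sequence `L ↦ s(Δ_L,L,φ₂)ᴴ Θ_L s(Δ_L,L,φ₁)` converges, as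
`L → ∞`, to `e^{iψ}·sinc(√A s/λ)`; that is, to `e^{iψ}·sin(π√A s/lam)/(π√A s/lam)` if
`s := sin φ₁ − sin φ₂ − g ≠ 0` and to `e^{iψ}` if `s = 0`. -/
theorem stmt7 (A lam : ℝ) (hA : 0 < A) (hlam : 0 < lam) (g ψ φ₁ φ₂ : ℝ) :
    Filter.Tendsto
      (fun L : ℕ =>
        dotProduct (star (steer (Real.sqrt A / (L * lam)) L φ₂))
          ((Matrix.diagonal fun ℓ : Fin L =>
              Complex.exp (Complex.I *
                ((2 * Real.pi * g * (Real.sqrt A / (L * lam)) *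
                    (((ℓ : ℕ) : ℝ) - ((L : ℝ) - 1) / 2) + ψ : ℝ) : ℂ))).mulVec
            (steer (Real.sqrt A / (L * lam)) L φ₁)))
      Filter.atTop
      (nhds
        (if Real.sin φ₁ - Real.sin φ₂ - g = 0 then Complex.exp (Complex.I * (ψ : ℝ))
         else
           Complex.exp (Complex.I * (ψ : ℝ)) *
             ((Real.sin (Real.pi * Real.sqrt A * (Real.sin φ₁ - Real.sin φ₂ - g) / lam) /
               (Real.pi * Real.sqrt A * (Real.sin φ₁ - Real.sin φ₂ - g) / lam) : ℝ) : ℂ))) := by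
  obtain ⟨c, hcdef⟩ : ∃ x : ℝ, x = Real.pi * Real.sqrt A * (Real.sin φ₁ - Real.sin φ₂ - g) / lam :=
    ⟨_, rfl⟩
  by_cases h0 : Real.sin φ₁ - Real.sin φ₂ - g = 0
  · rw [if_pos h0]
    apply Tendsto.congr' _ tendsto_const_nhds
    filter_upwards [eventually_gt_atTop 0] with L hL
    rw [key A lam hlam g ψ φ₁ φ₂ L hL, h0]
    have hLC : (L : ℂ) ≠ 0 := Nat.cast_ne_zero.mpr hL.ne'
    simp only [h0, mul_zero, zero_mul, zero_div, Complex.ofReal_zero, mul_zero,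
      Complex.exp_zero, Finset.sum_const, Finset.card_univ, Fintype.card_fin, nsmul_eq_mul,
      mul_one]
    rw [mul_assoc, inv_mul_cancel₀ hLC, mul_one]
  · rw [if_neg h0, ← hcdef]
    have hcne : c ≠ 0 := by
      rw [hcdef]
      exact div_ne_zero (mul_ne_zero (mul_ne_zero Real.pi_ne_zero
        (Real.sqrt_pos.mpr hA).ne') h0) hlam.ne'
    have hcC : ((c : ℝ) : ℂ) ≠ 0 := by exact_mod_cast hcne
    have hne : (-2 * Complex.I * (c : ℂ)) ≠ 0 := by
      simp [Complex.I_ne_zero, hcC]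
    -- the limit of the explicit formula
    have h1 : Tendsto (fun L : ℕ => ((L : ℂ) - 1) / L) atTop (nhds 1) := by
      have h := Tendsto.sub
        (tendsto_const_nhds : Tendsto (fun _ : ℕ => (1:ℂ)) atTop (nhds 1)) lim_inv_nat
      rw [sub_zero] at h
      apply h.congr'
      filter_upwards [eventually_gt_atTop 0] with L hL
      have hLC : (L : ℂ) ≠ 0 := Nat.cast_ne_zero.mpr hL.ne'
      field_simp
    have h2 : Tendsto (fun L : ℕ => Complex.exp (Complex.I * (c:ℂ) * (((L : ℂ) - 1) / L)))
        atTop (nhds (Complex.exp (Complex.I * c))) := by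
      have hm := Tendsto.mul
        (tendsto_const_nhds : Tendsto (fun _ : ℕ => Complex.I * (c:ℂ)) atTop (nhds _)) h1
      have := (Complex.continuous_exp.tendsto (Complex.I * (c:ℂ) * 1)).comp hm
      simpa [Function.comp_def] using this
    have h3 : Tendsto (fun L : ℕ => (L : ℂ) * (Complex.exp (-2 * Complex.I * (c:ℂ) / L) - 1))
        atTop (nhds (-2 * Complex.I * (c:ℂ))) := lim_mul_exp_sub_one _
    have hlim : Tendsto (fun L : ℕ =>
        Complex.exp (Complex.I * (ψ:ℂ)) * Complex.exp (Complex.I * (c:ℂ) * (((L : ℂ) - 1) / L)) *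
          (Complex.exp (-2 * Complex.I * (c:ℂ)) - 1) *
          ((L : ℂ) * (Complex.exp (-2 * Complex.I * (c:ℂ) / L) - 1))⁻¹) atTop
        (nhds (Complex.exp (Complex.I * (ψ:ℂ)) * Complex.exp (Complex.I * (c:ℂ)) *
          (Complex.exp (-2 * Complex.I * (c:ℂ)) - 1) * (-2 * Complex.I * (c:ℂ))⁻¹)) :=
      (((tendsto_const_nhds.mul h2).mul tendsto_const_nhds).mul (h3.inv₀ hne))
    -- identify the limit value
    have hval : Complex.exp (Complex.I * (ψ:ℂ)) * Complex.exp (Complex.I * (c:ℂ)) *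
        (Complex.exp (-2 * Complex.I * (c:ℂ)) - 1) * (-2 * Complex.I * (c:ℂ))⁻¹
        = Complex.exp (Complex.I * (ψ : ℝ)) * ((Real.sin c / c : ℝ) : ℂ) := by
      have h4 : Complex.exp (Complex.I * (c:ℂ)) * (Complex.exp (-2 * Complex.I * (c:ℂ)) - 1)
          = Complex.exp (-((c:ℂ) * Complex.I)) - Complex.exp ((c:ℂ) * Complex.I) := by
        rw [mul_sub, ← Complex.exp_add, mul_one]
        ring_nf
      rw [mul_assoc, mul_assoc, ← mul_assoc (Complex.exp (Complex.I * (c:ℂ))), h4]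
      congr 1
      rw [Complex.ofReal_div, Complex.ofReal_sin, Complex.sin]
      have hinv : ((-2 * Complex.I * (c:ℂ))⁻¹) * (c:ℂ) = Complex.I / 2 := by
        rw [inv_mul_eq_div, div_eq_div_iff hne two_ne_zero]
        linear_combination (2*(c:ℂ)) * Complex.I_sq
      rw [eq_div_iff hcC, mul_assoc, hinv, neg_mul]
      ring
    rw [← hval]
    apply Tendsto.congr' _ hlim
    -- eventually the dot product equals the explicit formula
    filter_upwards [eventually_gt_atTop (max 1 ⌈|c| / Real.pi⌉₊)] with L hL
    have hL1 : 0 < L := lt_of_le_of_lt (Nat.zero_le _) (lt_of_le_of_lt (le_max_left 1 _) hL)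
    have hLC : (L : ℂ) ≠ 0 := Nat.cast_ne_zero.mpr hL1.ne'
    have hLbig : |c| < Real.pi * L := by
      have h5 : (⌈|c| / Real.pi⌉₊ : ℝ) < L := by
        exact_mod_cast lt_of_le_of_lt (le_max_right 1 _) hL
      have h6 : |c| / Real.pi < L := lt_of_le_of_lt (Nat.le_ceil _) h5
      have := (div_lt_iff₀ Real.pi_pos).mp h6
      linarith
    have hr : Complex.exp (-2 * Complex.I * (c:ℂ) / L) ≠ 1 := by
      intro hone
      rw [Complex.exp_eq_one_iff] at hone
      obtain ⟨n, hn⟩ := hone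
      rw [div_eq_iff hLC] at hn
      have hcn : (c : ℂ) = -(n:ℂ) * Real.pi * L := by
        linear_combination (Complex.I / 2) * hn + ((c:ℂ) + (n:ℂ) * Real.pi * (L:ℂ)) * Complex.I_sq
      have hcr : c = -(n:ℝ) * Real.pi * L := by exact_mod_cast hcn
      rcases eq_or_ne n 0 with h | h
      · rw [h] at hcr; simp at hcr; exact hcne hcr
      · have h7 : (1:ℝ) ≤ |(n:ℝ)| := by exact_mod_cast Int.one_le_abs h
        have h8 : |c| = |(n:ℝ)| * Real.pi * L := by
          rw [hcr, abs_mul, abs_mul, abs_neg, abs_of_pos Real.pi_pos,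
            abs_of_pos (by exact_mod_cast hL1 : (0:ℝ) < (L:ℝ))]
        have hLpos : (0:ℝ) < (L:ℝ) := by exact_mod_cast hL1
        have h9 : Real.pi * ↑L ≤ |c| := by
          rw [h8]
          nlinarith [mul_pos Real.pi_pos hLpos]
        linarith
    rw [key A lam hlam g ψ φ₁ φ₂ L hL1, ← hcdef]
    have hsum : ∑ ℓ : Fin L, Complex.exp (Complex.I * (c:ℂ)
           * (((L : ℂ) - 1 - 2 * ((ℓ : ℕ) : ℂ)) / (L : ℂ)))
        = Complex.exp (Complex.I * (c:ℂ) * (((L : ℂ) - 1) / L)) *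
          ((Complex.exp (-2 * Complex.I * (c:ℂ)) - 1) /
            (Complex.exp (-2 * Complex.I * (c:ℂ) / L) - 1)) := by
      have hterm : ∀ ℓ : Fin L, Complex.exp (Complex.I * (c:ℂ)
            * (((L : ℂ) - 1 - 2 * ((ℓ : ℕ) : ℂ)) / (L : ℂ)))
          = Complex.exp (Complex.I * (c:ℂ) * (((L : ℂ) - 1) / L)) *
            (Complex.exp (-2 * Complex.I * (c:ℂ) / L)) ^ (ℓ : ℕ) := by
        intro ℓ
        rw [← Complex.exp_nat_mul, ← Complex.exp_add]
        congr 1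
        simp only [div_eq_mul_inv]
        ring
      rw [Finset.sum_congr rfl (fun ℓ _ => hterm ℓ), ← Finset.mul_sum]
      congr 1
      rw [Fin.sum_univ_eq_sum_range (fun k => (Complex.exp (-2 * Complex.I * (c:ℂ) / L)) ^ k),
        geom_sum_eq hr, ← Complex.exp_nat_mul, mul_div_cancel₀ _ hLC]
    rw [hsum]
    rw [div_eq_mul_inv, mul_inv]
    ring
end

section
/- (Proposition 2, maximum-at-corners.) Let μ₁₁, μ₁₂, μ₂₁, μ₂₂ be positive reals with μ₁₁ > μ₂₁ and μ₂₂ > μ₁₂. Define f(φ₁, φ₂) := (μ₁₁μ₂₂ cos φ₁ sin φ₂ − μ₁₂μ₂₁ sin φ₁ cos φ₂)² / (μ₁₁² cos²φ₁ + μ₂₁² sin²φ₁ + μ₁₂² cos²φ₂ + μ₂₂² sin²φ₂). Then for all φ₁, φ₂ ∈ [0, π/2], f(φ₁, φ₂) ≤ max( μ₁₁²μ₂₂²/(μ₁₁² + μ₂₂²), μ₁₂²μ₂₁²/(μ₁₂² + μ₂₁²) ), with equality attained at (φ₁, φ₂) = (0, π/2) for the first value and at (φ₁, φ₂) = (π/2,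 0) for the second. -/
/-- The objective of Proposition 2: the reciprocal of `Tr{(M̃M̃ᴴ)⁻¹}` for the `2×2`
IRS–user system, as a function of the angles `φ₁, φ₂` of the IRS reflection vectors. -/
noncomputable def objF (μ11 μ12 μ21 μ22 φ₁ φ₂ : ℝ) : ℝ :=
  (μ11 * μ22 * Real.cos φ₁ * Real.sin φ₂ - μ12 * μ21 * Real.sin φ₁ * Real.cos φ₂) ^ 2 /
    (μ11 ^ 2 * Real.cos φ₁ ^ 2 + μ21 ^ 2 * Real.sin φ₁ ^ 2 +
      μ12 ^ 2 * Real.cos φ₂ ^ 2 + μ22 ^ 2 * Real.sin φ₂ ^ 2)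

set_option maxHeartbeats 1000000 in
/-- Proposition 2, maximum-at-corners: for positive `μ`'s with `μ₁₁ > μ₂₁` and
`μ₂₂ > μ₁₂`, the objective `f` is bounded on `[0,π/2]²` by
`max(μ₁₁²μ₂₂²/(μ₁₁²+μ₂₂²), μ₁₂²μ₂₁²/(μ₁₂²+μ₂₁²))`, with equality at the corner
`(0,π/2)` for the first value and at `(π/2,0)` for the second. -/
theorem stmt12 (μ11 μ12 μ21 μ22 : ℝ)
    (h11 : 0 < μ11) (h12 : 0 < μ12) (h21 : 0 < μ21) (h22 : 0 < μ22)
    (hgt1 : μ21 < μ11) (hgt2 : μ12 < μ22) :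
    (∀ φ₁ φ₂ : ℝ, φ₁ ∈ Set.Icc 0 (Real.pi / 2) → φ₂ ∈ Set.Icc 0 (Real.pi / 2) →
      objF μ11 μ12 μ21 μ22 φ₁ φ₂ ≤
        max (μ11 ^ 2 * μ22 ^ 2 / (μ11 ^ 2 + μ22 ^ 2))
          (μ12 ^ 2 * μ21 ^ 2 / (μ12 ^ 2 + μ21 ^ 2))) ∧
    objF μ11 μ12 μ21 μ22 0 (Real.pi / 2) = μ11 ^ 2 * μ22 ^ 2 / (μ11 ^ 2 + μ22 ^ 2) ∧
    objF μ11 μ12 μ21 μ22 (Real.pi / 2) 0 = μ12 ^ 2 * μ21 ^ 2 / (μ12 ^ 2 + μ21 ^ 2) := by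
  refine ⟨?_, ?_, ?_⟩
  · intro φ₁ φ₂ h1 h2
    obtain ⟨h1a, h1b⟩ := h1
    obtain ⟨h2a, h2b⟩ := h2
    have hpi := Real.pi_pos
    have hc1 : 0 ≤ Real.cos φ₁ := Real.cos_nonneg_of_mem_Icc ⟨by linarith, h1b⟩
    have hc2 : 0 ≤ Real.cos φ₂ := Real.cos_nonneg_of_mem_Icc ⟨by linarith, h2b⟩
    have hs1 : 0 ≤ Real.sin φ₁ := Real.sin_nonneg_of_nonneg_of_le_pi h1a (by linarith)
    have hs2 : 0 ≤ Real.sin φ₂ := Real.sin_nonneg_of_nonneg_of_le_pi h2a (by linarith)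
    have hp1 : Real.sin φ₁ ^ 2 + Real.cos φ₁ ^ 2 = 1 := Real.sin_sq_add_cos_sq φ₁
    have hp2 : Real.sin φ₂ ^ 2 + Real.cos φ₂ ^ 2 = 1 := Real.sin_sq_add_cos_sq φ₂
    set c1 := Real.cos φ₁
    set s1 := Real.sin φ₁
    set c2 := Real.cos φ₂
    set s2 := Real.sin φ₂
    have hc1sq : c1 ^ 2 ≤ 1 := by nlinarith [sq_nonneg s1]
    have hs1sq : s1 ^ 2 ≤ 1 := by nlinarith [sq_nonneg c1]
    have hc2sq : c2 ^ 2 ≤ 1 := by nlinarith [sq_nonneg s2]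
    have hs2sq : s2 ^ 2 ≤ 1 := by nlinarith [sq_nonneg c2]
    have hD : 0 < μ11 ^ 2 * c1 ^ 2 + μ21 ^ 2 * s1 ^ 2 + μ12 ^ 2 * c2 ^ 2 + μ22 ^ 2 * s2 ^ 2 := by
      nlinarith [hp1, sq_nonneg (μ12 * c2), sq_nonneg (μ22 * s2), mul_pos h21 h21,
        mul_nonneg (mul_nonneg (by linarith : (0:ℝ) ≤ μ11 + μ21) (by linarith : (0:ℝ) ≤ μ11 - μ21))
          (sq_nonneg c1)]
    rw [objF, div_le_iff₀ hD]
    rcases le_total (μ12 * μ21 * s1 * c2) (μ11 * μ22 * c1 * s2) with h | h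
    · have hbc : 0 ≤ μ12 * μ21 * s1 * c2 := by positivity
      have step1 : (μ11 * μ22 * c1 * s2 - μ12 * μ21 * s1 * c2) ^ 2 ≤ (μ11 * μ22 * c1 * s2) ^ 2 := by
        nlinarith [mul_nonneg hbc (sub_nonneg.2 h)]
      have hS : (0:ℝ) < μ11 ^ 2 + μ22 ^ 2 := by positivity
      have step2 : (μ11 * μ22 * c1 * s2) ^ 2 * (μ11 ^ 2 + μ22 ^ 2) ≤
          μ11 ^ 2 * μ22 ^ 2 * (μ11 ^ 2 * c1 ^ 2 + μ21 ^ 2 * s1 ^ 2 + μ12 ^ 2 * c2 ^ 2 + μ22 ^ 2 * s2 ^ 2) := by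
        nlinarith [mul_nonneg (sq_nonneg (μ11 ^ 2 * μ22 * c1)) (sub_nonneg.2 hs2sq),
          mul_nonneg (sq_nonneg (μ11 * μ22 ^ 2 * s2)) (sub_nonneg.2 hc1sq),
          sq_nonneg (μ11 * μ22 * μ21 * s1), sq_nonneg (μ11 * μ22 * μ12 * c2)]
      calc (μ11 * μ22 * c1 * s2 - μ12 * μ21 * s1 * c2) ^ 2
          ≤ μ11 ^ 2 * μ22 ^ 2 / (μ11 ^ 2 + μ22 ^ 2) *
            (μ11 ^ 2 * c1 ^ 2 + μ21 ^ 2 * s1 ^ 2 + μ12 ^ 2 * c2 ^ 2 + μ22 ^ 2 * s2 ^ 2) := by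
            rw [div_mul_eq_mul_div, le_div_iff₀ hS]
            have := mul_le_mul_of_nonneg_right step1 hS.le
            linarith [step2]
        _ ≤ _ := by
            apply mul_le_mul_of_nonneg_right (le_max_left _ _) hD.le
    · have had : 0 ≤ μ11 * μ22 * c1 * s2 := by positivity
      have step1 : (μ11 * μ22 * c1 * s2 - μ12 * μ21 * s1 * c2) ^ 2 ≤ (μ12 * μ21 * s1 * c2) ^ 2 := by
        nlinarith [mul_nonneg had (sub_nonneg.2 h)]
      have hS : (0:ℝ) < μ12 ^ 2 + μ21 ^ 2 := by positivity
      have step2 : (μ12 * μ21 * s1 * c2) ^ 2 * (μ12 ^ 2 + μ21 ^ 2) ≤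
          μ12 ^ 2 * μ21 ^ 2 * (μ11 ^ 2 * c1 ^ 2 + μ21 ^ 2 * s1 ^ 2 + μ12 ^ 2 * c2 ^ 2 + μ22 ^ 2 * s2 ^ 2) := by
        nlinarith [mul_nonneg (sq_nonneg (μ12 ^ 2 * μ21 * c2)) (sub_nonneg.2 hs1sq),
          mul_nonneg (sq_nonneg (μ12 * μ21 ^ 2 * s1)) (sub_nonneg.2 hc2sq),
          sq_nonneg (μ12 * μ21 * μ11 * c1), sq_nonneg (μ12 * μ21 * μ22 * s2)]
      calc (μ11 * μ22 * c1 * s2 - μ12 * μ21 * s1 * c2) ^ 2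
          ≤ μ12 ^ 2 * μ21 ^ 2 / (μ12 ^ 2 + μ21 ^ 2) *
            (μ11 ^ 2 * c1 ^ 2 + μ21 ^ 2 * s1 ^ 2 + μ12 ^ 2 * c2 ^ 2 + μ22 ^ 2 * s2 ^ 2) := by
            rw [div_mul_eq_mul_div, le_div_iff₀ hS]
            have := mul_le_mul_of_nonneg_right step1 hS.le
            linarith [step2]
        _ ≤ _ := by
            apply mul_le_mul_of_nonneg_right (le_max_right _ _) hD.le
  · simp [objF, Real.cos_pi_div_two, Real.sin_pi_div_two]
    ring_nf
  · simp [objF, Real.cos_pi_div_two, Real.sin_pi_div_two]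
    ring_nf
end

section
/- (Proposition 2, optimal assignment.) Let μ₁₁, μ₁₂, μ₂₁, μ₂₂ be positive reals with μ₁₁ > μ₂₁, μ₂₂ > μ₁₂, and 1/μ₁₁² + 1/μ₂₂² < 1/μ₁₂² + 1/μ₂₁². Define f(φ₁, φ₂) := (μ₁₁μ₂₂ cos φ₁ sin φ₂ − μ₁₂μ₂₁ sin φ₁ cos φ₂)² / (μ₁₁² cos²φ₁ + μ₂₁² sin²φ₁ + μ₁₂² cos²φ₂ + μ₂₂² sin²φ₂). Then for all φ₁, φ₂ ∈ [0, π/2], f(φ₁, φ₂) ≤ f(0, π/2) = μ₁₁²μ₂₂²/(μ₁₁² + μ₂₂²); i.e., the assignment associating user 1 to IRS 1 and user 2 to IRS 2 is globally optimal. -/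
lemma aux_value (μ11 μ12 μ21 μ22 : ℝ) :
    objF μ11 μ12 μ21 μ22 0 (Real.pi / 2) = μ11 ^ 2 * μ22 ^ 2 / (μ11 ^ 2 + μ22 ^ 2) := by
  simp [objF, Real.cos_pi_div_two, Real.sin_pi_div_two]
  ring_nf

set_option maxHeartbeats 1600000 in
/-- Proposition 2, optimal assignment: for positive `μ`'s with `μ₁₁ > μ₂₁`, `μ₂₂ > μ₁₂`,
and `1/μ₁₁² + 1/μ₂₂² < 1/μ₁₂² + 1/μ₂₁²`, the corner `(0, π/2)` (user 1 ↦ IRS 1,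
user 2 ↦ IRS 2) is the global maximum of `f` on `[0,π/2]²`, with value
`μ₁₁²μ₂₂²/(μ₁₁² + μ₂₂²)`. -/
theorem stmt14 (μ11 μ12 μ21 μ22 : ℝ)
    (h11 : 0 < μ11) (h12 : 0 < μ12) (h21 : 0 < μ21) (h22 : 0 < μ22)
    (hgt1 : μ21 < μ11) (hgt2 : μ12 < μ22)
    (hsel : 1 / μ11 ^ 2 + 1 / μ22 ^ 2 < 1 / μ12 ^ 2 + 1 / μ21 ^ 2) :
    (∀ φ₁ φ₂ : ℝ, φ₁ ∈ Set.Icc 0 (Real.pi / 2) → φ₂ ∈ Set.Icc 0 (Real.pi / 2) →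
      objF μ11 μ12 μ21 μ22 φ₁ φ₂ ≤ objF μ11 μ12 μ21 μ22 0 (Real.pi / 2)) ∧
    objF μ11 μ12 μ21 μ22 0 (Real.pi / 2) = μ11 ^ 2 * μ22 ^ 2 / (μ11 ^ 2 + μ22 ^ 2) := by
  have hval := aux_value μ11 μ12 μ21 μ22
  refine ⟨?_, hval⟩
  intro φ₁ φ₂ hφ₁ hφ₂
  rw [hval, objF]
  set c1 := Real.cos φ₁ with hc1def
  set s1 := Real.sin φ₁ with hs1def
  set c2 := Real.cos φ₂ with hc2def
  set s2 := Real.sin φ₂ with hs2def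
  have hc1 : 0 ≤ c1 := Real.cos_nonneg_of_mem_Icc ⟨by linarith [hφ₁.1, Real.pi_pos], hφ₁.2⟩
  have hs1 : 0 ≤ s1 := Real.sin_nonneg_of_nonneg_of_le_pi hφ₁.1
    (by linarith [hφ₁.2, Real.pi_pos])
  have hc2 : 0 ≤ c2 := Real.cos_nonneg_of_mem_Icc ⟨by linarith [hφ₂.1, Real.pi_pos], hφ₂.2⟩
  have hs2 : 0 ≤ s2 := Real.sin_nonneg_of_nonneg_of_le_pi hφ₂.1
    (by linarith [hφ₂.2, Real.pi_pos])
  have h1 : c1 ^ 2 + s1 ^ 2 = 1 := by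
    rw [hc1def, hs1def, add_comm]; exact Real.sin_sq_add_cos_sq φ₁
  have h2 : c2 ^ 2 + s2 ^ 2 = 1 := by
    rw [hc2def, hs2def, add_comm]; exact Real.sin_sq_add_cos_sq φ₂
  clear_value c1 s1 c2 s2
  clear hc1def hs1def hc2def hs2def hval hφ₁ hφ₂
  -- abbreviations
  have hA : 0 < μ11 ^ 2 := by positivity
  have hB : 0 < μ21 ^ 2 := by positivity
  have hC : 0 < μ12 ^ 2 := by positivity
  have hD : 0 < μ22 ^ 2 := by positivity
  have hkey : μ21 ^ 2 * μ12 ^ 2 * (μ11 ^ 2 + μ22 ^ 2) ≤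
      μ11 ^ 2 * μ22 ^ 2 * (μ21 ^ 2 + μ12 ^ 2) := by
    rw [div_add_div _ _ (ne_of_gt hA) (ne_of_gt hD),
        div_add_div _ _ (ne_of_gt hC) (ne_of_gt hB),
        div_lt_div_iff₀ (by positivity) (by positivity)] at hsel
    nlinarith [hsel]
  clear hsel
  have hden : 0 < μ11 ^ 2 * c1 ^ 2 + μ21 ^ 2 * s1 ^ 2 +
      μ12 ^ 2 * c2 ^ 2 + μ22 ^ 2 * s2 ^ 2 := by
    rcases le_total (μ11 ^ 2) (μ21 ^ 2) with h | h
    · nlinarith [mul_nonneg (sub_nonneg.2 h) (sq_nonneg s1),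
        mul_nonneg hC.le (sq_nonneg c2), mul_nonneg hD.le (sq_nonneg s2)]
    · nlinarith [mul_nonneg (sub_nonneg.2 h) (sq_nonneg c1),
        mul_nonneg hC.le (sq_nonneg c2), mul_nonneg hD.le (sq_nonneg s2)]
  rw [div_le_div_iff₀ hden (by positivity)]
  have hc1le : c1 ^ 2 ≤ 1 := by linarith [sq_nonneg s1]
  have hs1le : s1 ^ 2 ≤ 1 := by linarith [sq_nonneg c1]
  have hc2le : c2 ^ 2 ≤ 1 := by linarith [sq_nonneg s2]
  have hs2le : s2 ^ 2 ≤ 1 := by linarith [sq_nonneg c2]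
  rcases le_total (μ12 * μ21 * s1 * c2) (μ11 * μ22 * c1 * s2) with hcase | hcase
  · -- numerator ≤ (μ11 μ22 c1 s2)^2
    have hx : 0 ≤ μ12 * μ21 * s1 * c2 := by positivity
    have hnum : (μ11 * μ22 * c1 * s2 - μ12 * μ21 * s1 * c2) ^ 2 ≤
        (μ11 * μ22 * c1 * s2) ^ 2 := by nlinarith
    have hstep : c1 ^ 2 * s2 ^ 2 * (μ11 ^ 2 + μ22 ^ 2) ≤
        μ11 ^ 2 * c1 ^ 2 + μ21 ^ 2 * s1 ^ 2 + μ12 ^ 2 * c2 ^ 2 + μ22 ^ 2 * s2 ^ 2 := by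
      nlinarith [mul_nonneg (mul_nonneg hA.le (sq_nonneg c1)) (sub_nonneg.2 hs2le),
        mul_nonneg (mul_nonneg hD.le (sq_nonneg s2)) (sub_nonneg.2 hc1le),
        mul_nonneg hB.le (sq_nonneg s1), mul_nonneg hC.le (sq_nonneg c2)]
    have h3 := mul_le_mul_of_nonneg_right hnum (le_of_lt (by positivity :
      (0:ℝ) < μ11 ^ 2 + μ22 ^ 2))
    have h5 := mul_le_mul_of_nonneg_left hstep (le_of_lt (by positivity :
      (0:ℝ) < μ11 ^ 2 * μ22 ^ 2))
    linarith [h3, h5]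
  · -- numerator ≤ (μ12 μ21 s1 c2)^2
    have hx : 0 ≤ μ11 * μ22 * c1 * s2 := by positivity
    have hnum : (μ11 * μ22 * c1 * s2 - μ12 * μ21 * s1 * c2) ^ 2 ≤
        (μ12 * μ21 * s1 * c2) ^ 2 := by nlinarith
    have hstep : μ21 ^ 2 * μ12 ^ 2 * (s1 ^ 2 * c2 ^ 2 * (μ11 ^ 2 + μ22 ^ 2)) ≤
        μ11 ^ 2 * μ22 ^ 2 *
          (μ11 ^ 2 * c1 ^ 2 + μ21 ^ 2 * s1 ^ 2 + μ12 ^ 2 * c2 ^ 2 + μ22 ^ 2 * s2 ^ 2) := by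
      nlinarith [mul_nonneg (mul_nonneg (sq_nonneg s1) (sq_nonneg c2))
          (sub_nonneg.2 hkey),
        mul_nonneg (mul_nonneg (mul_nonneg (mul_pos hA hD).le hB.le) (sq_nonneg s1))
          (sub_nonneg.2 hc2le),
        mul_nonneg (mul_nonneg (mul_nonneg (mul_pos hA hD).le hC.le) (sq_nonneg c2))
          (sub_nonneg.2 hs1le),
        mul_nonneg (mul_nonneg (mul_pos hA hD).le hA.le) (sq_nonneg c1),
        mul_nonneg (mul_nonneg (mul_pos hA hD).le hD.le) (sq_nonneg s2)]
    have h3 := mul_le_mul_of_nonneg_right hnum (le_of_lt (by positivity :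
      (0:ℝ) < μ11 ^ 2 + μ22 ^ 2))
    linarith [h3, hstep]
end

section
/- Let μ₁₁, μ₁₂, μ₂₂ be positive reals with μ₂₂ > μ₁₂. Then the function g(φ₂) := (μ₁₁ μ₂₂ sin φ₂)² / (μ₁₁² + μ₁₂² cos²φ₂ + μ₂₂² sin²φ₂) is monotone nondecreasing on [0, π/2], and its maximum over [0, π/2] equals μ₁₁²μ₂₂²/(μ₁₁² + μ₂₂²), attained at φ₂ = π/2. -/
/-- The restriction `g(φ₂) = f(0, φ₂)` of the Proposition 2 objective to the boundary
edge `φ₁ = 0` of the square `[0, π/2]²`. -/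
noncomputable def objG (μ11 μ12 μ22 φ₂ : ℝ) : ℝ :=
  (μ11 * μ22 * Real.sin φ₂) ^ 2 /
    (μ11 ^ 2 + μ12 ^ 2 * Real.cos φ₂ ^ 2 + μ22 ^ 2 * Real.sin φ₂ ^ 2)

/-- For positive `μ₁₁, μ₁₂, μ₂₂` with `μ₂₂ > μ₁₂`, the function `g` is monotone
nondecreasing on `[0, π/2]`, and its maximum over `[0, π/2]` equals
`μ₁₁²μ₂₂²/(μ₁₁² + μ₂₂²)`, attained at `φ₂ = π/2`. -/
theorem stmt15 (μ11 μ12 μ22 : ℝ) (h11 : 0 < μ11) (h12 : 0 < μ12) (h22 : 0 < μ22)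
    (hgt : μ12 < μ22) :
    MonotoneOn (objG μ11 μ12 μ22) (Set.Icc 0 (Real.pi / 2)) ∧
    (∀ x ∈ Set.Icc 0 (Real.pi / 2),
      objG μ11 μ12 μ22 x ≤ μ11 ^ 2 * μ22 ^ 2 / (μ11 ^ 2 + μ22 ^ 2)) ∧
    objG μ11 μ12 μ22 (Real.pi / 2) = μ11 ^ 2 * μ22 ^ 2 / (μ11 ^ 2 + μ22 ^ 2) := by
  set A := μ11 ^ 2 * μ22 ^ 2 with hA
  set B := μ11 ^ 2 + μ12 ^ 2 with hB
  set C := μ22 ^ 2 - μ12 ^ 2 with hC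
  have hApos : 0 < A := by positivity
  have hBpos : 0 < B := by positivity
  have hCpos : 0 < C := by
    have : μ12 ^ 2 < μ22 ^ 2 := by nlinarith
    simp [hC]; linarith
  have key : ∀ x : ℝ, objG μ11 μ12 μ22 x = A * Real.sin x ^ 2 / (B + C * Real.sin x ^ 2) := by
    intro x
    have hcs : Real.cos x ^ 2 = 1 - Real.sin x ^ 2 := by
      have := Real.sin_sq_add_cos_sq x; linarith
    simp only [objG, hcs, hA, hB, hC]
    ring_nf
  have hmonoF : ∀ s t : ℝ, 0 ≤ s → s ≤ t →
      A * s / (B + C * s) ≤ A * t / (B + C * t) := by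
    intro s t hs hst
    have hds : 0 < B + C * s := by positivity
    have hdt : 0 < B + C * t := by nlinarith
    rw [div_le_div_iff₀ hds hdt]
    nlinarith [mul_nonneg (mul_pos hApos hBpos).le (sub_nonneg.2 hst)]
  have hmono : MonotoneOn (objG μ11 μ12 μ22) (Set.Icc 0 (Real.pi / 2)) := by
    intro x hx y hy hxy
    rw [key, key]
    have hsx : 0 ≤ Real.sin x := Real.sin_nonneg_of_nonneg_of_le_pi hx.1
      (le_trans hx.2 (by linarith [Real.pi_pos]))
    have hsy : 0 ≤ Real.sin y := Real.sin_nonneg_of_nonneg_of_le_pi hy.1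
      (le_trans hy.2 (by linarith [Real.pi_pos]))
    have hsin : Real.sin x ≤ Real.sin y := by
      apply Real.sin_le_sin_of_le_of_le_pi_div_two (by linarith [hx.1, Real.pi_pos]) hy.2 hxy
    exact hmonoF _ _ (by positivity) (by nlinarith)
  have hend : objG μ11 μ12 μ22 (Real.pi / 2) = μ11 ^ 2 * μ22 ^ 2 / (μ11 ^ 2 + μ22 ^ 2) := by
    simp [objG, Real.sin_pi_div_two, Real.cos_pi_div_two]
    ring_nf
  refine ⟨hmono, fun x hx => ?_, hend⟩
  have := hmono hx (Set.right_mem_Icc.2 (by linarith [Real.pi_pos])) hx.2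
  rwa [hend] at this
end
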